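/- arXiv:2406.17212 — 2 statements merged into one kernel-verified Lean document; each statement's English description precedes it below -/
import Mathlib

section
/- Let (M,g) be a pseudo-Riemannian manifold and k^a a conformal Killing vector. On the open set where g(k,k) ≠ 0, the conformally rescaled metric ĝ = |g(k,k)|^{-1} g makes k a Killing vector, i.e. k is Killing for ĝ. -/
noncomputable section
open scoped BigOperators

/-- Partial derivative `∂ᵢ f` of a real-valued function on the chart `Fin n → ℝ`. -/
def pd {n : ℕ} (i : Fin n) (f : (Fin n → ℝ) → ℝ) (x : Fin n → ℝ) : ℝ :=
  fderiv ℝ f x (fun j => if j = i then (1 : ℝ) else 0)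

/-- A pseudo-Riemannian metric on the global chart `Fin n → ℝ`. -/
structure ChartPseudoMetric (n : ℕ) where
  g : (Fin n → ℝ) → Fin n → Fin n → ℝ
  ginv : (Fin n → ℝ) → Fin n → Fin n → ℝ
  symm : ∀ x a b, g x a b = g x b a
  invl : ∀ x a b, (∑ c, ginv x a c * g x c b) = if a = b then (1 : ℝ) else 0
  smooth_g : ∀ a b, ContDiff ℝ (⊤ : ℕ∞) fun x => g x a b
  smooth_ginv : ∀ a b, ContDiff ℝ (⊤ : ℕ∞) fun x => ginv x a b

namespace ChartPseudoMetric

variable {n : ℕ} (M : ChartPseudoMetric n)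

/-- Christoffel symbols `Γ^a_{bc}` of the Levi-Civita connection. -/
def Γ (x : Fin n → ℝ) (a b c : Fin n) : ℝ :=
  (1 / 2) * ∑ d, M.ginv x a d *
    (pd b (fun y => M.g y d c) x + pd c (fun y => M.g y d b) x - pd d (fun y => M.g y b c) x)

/-- Covariant derivative `∇_a k_b` of a 1-form. -/
def covD1 (k : (Fin n → ℝ) → Fin n → ℝ) (x : Fin n → ℝ) (a b : Fin n) : ℝ :=
  pd a (fun y => k y b) x - ∑ c, M.Γ x c a b * k x c

/-- Covariant derivative `∇_a v^b` of a vector field. -/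
def covDvec (v : (Fin n → ℝ) → Fin n → ℝ) (x : Fin n → ℝ) (a b : Fin n) : ℝ :=
  pd a (fun y => v y b) x + ∑ c, M.Γ x b a c * v x c

/-- Covariant derivative `∇_a k_{bc}` of a covariant 2-tensor. -/
def covD2 (k : (Fin n → ℝ) → Fin n → Fin n → ℝ) (x : Fin n → ℝ) (a b c : Fin n) : ℝ :=
  pd a (fun y => k y b c) x - (∑ d, M.Γ x d a b * k x d c) - ∑ d, M.Γ x d a c * k x b d

/-- Divergence `∇_a v^a` of a vector field. -/
def divVec (v : (Fin n → ℝ) → Fin n → ℝ) (x : Fin n → ℝ) : ℝ :=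
  ∑ a, M.covDvec v x a a

/-- Laplacian `Δf = g^{ac} ∇_a ∇_c f` of a function. -/
def lap0 (f : (Fin n → ℝ) → ℝ) (x : Fin n → ℝ) : ℝ :=
  ∑ a, ∑ c, M.ginv x a c * M.covD1 (fun y b => pd b f y) x a c

/-- Laplacian `Δk_b = g^{ac} ∇_a ∇_c k_b` of a 1-form. -/
def lap1 (k : (Fin n → ℝ) → Fin n → ℝ) (x : Fin n → ℝ) (b : Fin n) : ℝ :=
  ∑ a, ∑ c, M.ginv x a c * M.covD2 (fun y p q => M.covD1 k y p q) x a c b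

/-- Riemann curvature `R_{ab}{}^c{}_d`, with the convention
`R_{ab}{}^c{}_d X^d = ∇_a ∇_b X^c - ∇_b ∇_a X^c`. -/
def Riem (x : Fin n → ℝ) (a b c d : Fin n) : ℝ :=
  pd a (fun y => M.Γ y c b d) x - pd b (fun y => M.Γ y c a d) x
    + (∑ e, M.Γ x c a e * M.Γ x e b d) - ∑ e, M.Γ x c b e * M.Γ x e a d

/-- Ricci curvature `R_{bd} = R_{ab}{}^a{}_d`. -/
def Ricci (x : Fin n → ℝ) (b d : Fin n) : ℝ := ∑ a, M.Riem x a b a d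

/-- Scalar curvature. -/
def scal (x : Fin n → ℝ) : ℝ := ∑ b, ∑ d, M.ginv x b d * M.Ricci x b d

/-- Trace of the Schouten tensor, `J = Scal/(2(n-1))`. -/
def Jsc (x : Fin n → ℝ) : ℝ := (1 / (2 * ((n : ℝ) - 1))) * M.scal x

/-- Schouten tensor, `P_{ab} = (Ric_{ab} - J g_{ab})/(n-2)`. -/
def Schouten (x : Fin n → ℝ) (a b : Fin n) : ℝ :=
  (1 / ((n : ℝ) - 2)) * (M.Ricci x a b - M.Jsc x * M.g x a b)

end ChartPseudoMetric

/-! In coordinates the Killing operator `∇_a k_b + ∇_b k_a` of the lowered field is the Lie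
derivative `(ℒ_k g)_{ab}`, so the conformal Killing equation reads `ℒ_k g = σ g` with
`σ = (2/n) ∇_c k^c`. Contracting twice with `k` gives `k(q) = σ q` for `q = g(k,k)`, hence
`k(|q|⁻¹) = -σ |q|⁻¹` where `q ≠ 0`, and the Leibniz rule yields
`ℒ_k (|q|⁻¹ g) = k(|q|⁻¹) g + |q|⁻¹ σ g = 0`. -/

theorem HasFDerivAt.abs_inv {E : Type*} [NormedAddCommGroup E] [NormedSpace ℝ E]
    {f : E → ℝ} {f' : E →L[ℝ] ℝ} {x : E} (hf : HasFDerivAt f f' x) (h0 : f x ≠ 0) :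
    HasFDerivAt (fun y => |f y|⁻¹) ((-(f x)⁻¹ * |f x|⁻¹) • f') x := by
  refine ((hasFDerivAt_inv (abs_ne_zero.2 h0)).comp x (hf.abs h0)).congr_fderiv ?_
  ext v
  have hs : (SignType.sign (f x) : ℝ) * |f x| = f x := sign_mul_abs _
  simp only [sq_abs, ContinuousLinearMap.comp_smulₛₗ, Real.ringHom_apply, smul_apply,
    ContinuousLinearMap.comp_apply, ContinuousLinearMap.toSpanSingleton_apply, smul_eq_mul,
    mul_neg, neg_mul, neg_inj]
  field_simp
  linear_combination f' v * hs

variable {n : ℕ}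

lemma pd_mul (i : Fin n) {f g : (Fin n → ℝ) → ℝ} {x : Fin n → ℝ}
    (hf : DifferentiableAt ℝ f x) (hg : DifferentiableAt ℝ g x) :
    pd i (fun y => f y * g y) x = pd i f x * g x + f x * pd i g x := by
  simp only [pd, fderiv_fun_mul hf hg, add_apply, smul_apply, smul_eq_mul]
  ring

lemma pd_sum {ι : Type*} (s : Finset ι) {F : ι → (Fin n → ℝ) → ℝ} (i : Fin n)
    {x : Fin n → ℝ}
    (h : ∀ j ∈ s, DifferentiableAt ℝ (F j) x) :
    pd i (fun y => ∑ j ∈ s, F j y) x = ∑ j ∈ s, pd i (F j) x := by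
  simp only [pd, fderiv_fun_sum h, sum_apply]

lemma pd_abs_inv (i : Fin n) {f : (Fin n → ℝ) → ℝ} {x : Fin n → ℝ}
    (hf : DifferentiableAt ℝ f x) (h0 : f x ≠ 0) :
    pd i (fun y => |f y|⁻¹) x = -(f x)⁻¹ * |f x|⁻¹ * pd i f x := by
  simp only [pd, (hf.hasFDerivAt.abs_inv h0).fderiv, smul_apply, smul_eq_mul]

section LieDerivative

variable (k : (Fin n → ℝ) → Fin n → ℝ) (h : (Fin n → ℝ) → Fin n → Fin n → ℝ)

def lieDeriv (x : Fin n → ℝ) (a b : Fin n) : ℝ :=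
  (∑ c, k x c * pd c (fun y => h y a b) x) + (∑ c, h x c b * pd a (fun y => k y c) x)
    + (∑ c, h x a c * pd b (fun y => k y c) x)

def quadForm (y : Fin n → ℝ) : ℝ := ∑ a, ∑ b, h y a b * k y a * k y b

variable {k h} {x : Fin n → ℝ}

lemma lieDeriv_mul {f : (Fin n → ℝ) → ℝ} {a b : Fin n} (hf : DifferentiableAt ℝ f x)
    (hh : DifferentiableAt ℝ (fun y => h y a b) x) :
    lieDeriv k (fun y a b => f y * h y a b) x a b
      = (∑ c, k x c * pd c f x) * h x a b + f x * lieDeriv k h x a b := by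
  simp only [lieDeriv, pd_mul _ hf hh, mul_add, Finset.mul_sum, Finset.sum_mul,
    ← Finset.sum_add_distrib]
  exact Finset.sum_congr rfl fun c _ => by ring

lemma differentiableAt_quadForm (hh : ∀ a b, DifferentiableAt ℝ (fun y => h y a b) x)
    (hk : ∀ c, DifferentiableAt ℝ (fun y => k y c) x) :
    DifferentiableAt ℝ (quadForm k h) x :=
  DifferentiableAt.fun_sum fun a _ => DifferentiableAt.fun_sum fun b _ =>
    ((hh a b).fun_mul (hk a)).fun_mul (hk b)

lemma pd_quadForm (hh : ∀ a b, DifferentiableAt ℝ (fun y => h y a b) x)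
    (hk : ∀ c, DifferentiableAt ℝ (fun y => k y c) x) (c : Fin n) :
    pd c (quadForm k h) x = ∑ a, ∑ b, (pd c (fun y => h y a b) x * k x a * k x b
      + h x a b * pd c (fun y => k y a) x * k x b + h x a b * k x a * pd c (fun y => k y b) x) := by
  unfold quadForm
  rw [pd_sum _ _ fun a _ => DifferentiableAt.fun_sum fun b _ =>
    ((hh a b).fun_mul (hk a)).fun_mul (hk b)]
  refine Finset.sum_congr rfl fun a _ => ?_
  rw [pd_sum _ _ fun b _ => ((hh a b).fun_mul (hk a)).fun_mul (hk b)]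
  refine Finset.sum_congr rfl fun b _ => ?_
  rw [pd_mul _ ((hh a b).fun_mul (hk a)) (hk b), pd_mul _ (hh a b) (hk a)]
  ring

lemma sum_sum_mul_lieDeriv (hh : ∀ a b, DifferentiableAt ℝ (fun y => h y a b) x)
    (hk : ∀ c, DifferentiableAt ℝ (fun y => k y c) x) :
    ∑ a, ∑ b, k x a * k x b * lieDeriv k h x a b = ∑ c, k x c * pd c (quadForm k h) x := by
  simp only [pd_quadForm hh hk, lieDeriv, mul_add, Finset.mul_sum, Finset.sum_add_distrib]
  congr 1; congr 1
  · refine (Finset.sum_congr rfl fun _ _ => Finset.sum_comm).trans ?_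
    rw [Finset.sum_comm]
    exact Finset.sum_congr rfl fun _ _ => Finset.sum_congr rfl fun _ _ =>
      Finset.sum_congr rfl fun _ _ => by ring
  · refine Finset.sum_congr rfl fun a _ => ?_
    rw [Finset.sum_comm]
    exact Finset.sum_congr rfl fun _ _ => Finset.sum_congr rfl fun _ _ => by ring
  · rw [Finset.sum_comm]
    exact Finset.sum_congr rfl fun _ _ => Finset.sum_congr rfl fun _ _ =>
      Finset.sum_congr rfl fun _ _ => by ring

end LieDerivative

namespace ChartPseudoMetric

variable (M : ChartPseudoMetric n)

lemma differentiableAt_g (a b : Fin n) (x : Fin n → ℝ) :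
    DifferentiableAt ℝ (fun y => M.g y a b) x :=
  ((M.smooth_g a b).differentiable (by simp)).differentiableAt

lemma pd_g_comm (i a b : Fin n) (x : Fin n → ℝ) :
    pd i (fun y => M.g y a b) x = pd i (fun y => M.g y b a) x := by
  simp only [M.symm _ a b]

lemma sum_g_mul_ginv (x : Fin n → ℝ) (a b : Fin n) :
    ∑ c, M.g x a c * M.ginv x c b = if a = b then 1 else 0 := by
  have hleft : (Matrix.of fun p q => M.ginv x p q) * Matrix.of (fun p q => M.g x p q) = 1 := by
    ext p q
    simp [Matrix.mul_apply, M.invl, Matrix.one_apply]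
  have hright := mul_eq_one_comm.mp hleft
  simpa [Matrix.mul_apply, Matrix.one_apply] using congrFun (congrFun hright a) b

lemma sum_g_mul_Γ (x : Fin n → ℝ) (a b d : Fin n) :
    ∑ c, M.g x d c * M.Γ x c a b
      = (1 / 2) * (pd a (fun y => M.g y d b) x + pd b (fun y => M.g y d a) x
          - pd d (fun y => M.g y a b) x) := by
  have hcontract : ∀ e (P : ℝ), ∑ c, M.g x d c * (1 / 2 * (M.ginv x c e * P))
      = 1 / 2 * (if d = e then 1 else 0) * P := by
    intro e P
    rw [← M.sum_g_mul_ginv x d e, Finset.mul_sum, Finset.sum_mul]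
    exact Finset.sum_congr rfl fun _ _ => by ring
  simp only [Γ, Finset.mul_sum]
  rw [Finset.sum_comm]
  simp only [hcontract]
  simp

lemma covD1_add_covD1_eq_lieDeriv {k kd : (Fin n → ℝ) → Fin n → ℝ} {x : Fin n → ℝ}
    (hk : ∀ c, DifferentiableAt ℝ (fun y => k y c) x)
    (hkd : ∀ y b, kd y b = ∑ c, M.g y b c * k y c) (a b : Fin n) :
    M.covD1 kd x a b + M.covD1 kd x b a = lieDeriv k M.g x a b := by
  have hpd_kd : ∀ i p, pd i (fun y => kd y p) x
      = ∑ c, (pd i (fun y => M.g y p c) x * k x c + M.g x p c * pd i (fun y => k y c) x) := by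
    intro i p
    simp only [hkd]
    rw [pd_sum _ _ fun c _ => (M.differentiableAt_g p c x).fun_mul (hk c)]
    exact Finset.sum_congr rfl fun c _ => pd_mul _ (M.differentiableAt_g p c x) (hk c)
  have hΓ_kd : ∀ p r, ∑ c, M.Γ x c p r * kd x c
      = ∑ c, (1 / 2) * (pd p (fun y => M.g y c r) x + pd r (fun y => M.g y c p) x
          - pd c (fun y => M.g y p r) x) * k x c := by
    intro p r
    simp only [hkd, Finset.mul_sum]
    rw [Finset.sum_comm]
    refine Finset.sum_congr rfl fun d _ => ?_
    rw [← M.sum_g_mul_Γ, Finset.sum_mul]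
    exact Finset.sum_congr rfl fun c _ => by rw [M.symm x c d]; ring
  simp only [covD1, lieDeriv, hpd_kd, hΓ_kd, ← Finset.sum_sub_distrib,
    ← Finset.sum_add_distrib]
  refine Finset.sum_congr rfl fun c _ => ?_
  rw [M.pd_g_comm a b c, M.pd_g_comm b a c, M.pd_g_comm c b a, M.symm x b c]
  ring

end ChartPseudoMetric

lemma lieDeriv_abs_inv_quadForm_mul_eq_zero {k : (Fin n → ℝ) → Fin n → ℝ}
    {h : (Fin n → ℝ) → Fin n → Fin n → ℝ} {x : Fin n → ℝ} {σ : ℝ}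
    (hh : ∀ a b, DifferentiableAt ℝ (fun y => h y a b) x)
    (hk : ∀ c, DifferentiableAt ℝ (fun y => k y c) x)
    (hconf : ∀ a b, lieDeriv k h x a b = σ * h x a b) (hq : quadForm k h x ≠ 0) (a b : Fin n) :
    lieDeriv k (fun y a b => |quadForm k h y|⁻¹ * h y a b) x a b = 0 := by
  have hqd := differentiableAt_quadForm hh hk
  have hq_along : ∑ c, k x c * pd c (quadForm k h) x = σ * quadForm k h x := by
    rw [← sum_sum_mul_lieDeriv hh hk, quadForm]
    simp only [hconf, Finset.mul_sum]
    exact Finset.sum_congr rfl fun _ _ => Finset.sum_congr rfl fun _ _ => by ring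
  have hinv_along : ∑ c, k x c * pd c (fun y => |quadForm k h y|⁻¹) x
      = -σ * |quadForm k h x|⁻¹ := by
    simp only [pd_abs_inv _ hqd hq, mul_left_comm (k x _), ← Finset.mul_sum, hq_along]
    field_simp
  rw [lieDeriv_mul (hqd.hasFDerivAt.abs_inv hq).differentiableAt (hh a b), hinv_along, hconf]
  ring

theorem ckv_killing_for_rescaled_metric_general {n : ℕ} (M : ChartPseudoMetric n)
    (k : (Fin n → ℝ) → Fin n → ℝ)
    (hk_smooth : ∀ a, ContDiff ℝ (⊤ : ℕ∞) fun x => k x a)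
    (kd : (Fin n → ℝ) → Fin n → ℝ)
    (hkd : ∀ x b, kd x b = ∑ c, M.g x b c * k x c)
    (hCKV : ∀ x a b,
      M.covD1 kd x a b + M.covD1 kd x b a
        = (2 / (n : ℝ)) * M.divVec k x * M.g x a b)
    (q : (Fin n → ℝ) → ℝ)
    (hq : ∀ x, q x = ∑ a, ∑ b, M.g x a b * k x a * k x b) :
    ∀ x, q x ≠ 0 → ∀ a b,
      (∑ c, k x c * pd c (fun y => |q y|⁻¹ * M.g y a b) x)
        + (∑ c, |q x|⁻¹ * M.g x c b * pd a (fun y => k y c) x)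
        + (∑ c, |q x|⁻¹ * M.g x a c * pd b (fun y => k y c) x) = 0 := by
  obtain rfl : q = quadForm k M.g := funext hq
  intro x hqx
  have hk : ∀ c, DifferentiableAt ℝ (fun y => k y c) x := fun c =>
    ((hk_smooth c).differentiable (by simp)).differentiableAt
  exact lieDeriv_abs_inv_quadForm_mul_eq_zero (fun a b => M.differentiableAt_g a b x) hk
    (fun a b => (M.covD1_add_covD1_eq_lieDeriv hk hkd a b).symm.trans (hCKV x a b)) hqx

/-- if `k` is a conformal Killing vector, then on the set where
`q = g(k,k) ≠ 0` the vector field `k` is Killing for `ĝ = |g(k,k)|⁻¹ g`,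
expressed via the vanishing of the Lie derivative of `ĝ` along `k`. -/
theorem ckv_killing_for_rescaled_metric {n : ℕ} (hn : 1 ≤ n) (M : ChartPseudoMetric n)
    (k : (Fin n → ℝ) → Fin n → ℝ)
    (hk_smooth : ∀ a, ContDiff ℝ (⊤ : ℕ∞) fun x => k x a)
    (kd : (Fin n → ℝ) → Fin n → ℝ)
    (hkd : ∀ x b, kd x b = ∑ c, M.g x b c * k x c)
    (hCKV : ∀ x a b,
      M.covD1 kd x a b + M.covD1 kd x b a
        = (2 / (n : ℝ)) * M.divVec k x * M.g x a b)
    (q : (Fin n → ℝ) → ℝ)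
    (hq : ∀ x, q x = ∑ a, ∑ b, M.g x a b * k x a * k x b) :
    ∀ x, q x ≠ 0 → ∀ a b,
      (∑ c, k x c * pd c (fun y => |q y|⁻¹ * M.g y a b) x)
        + (∑ c, |q x|⁻¹ * M.g x c b * pd a (fun y => k y c) x)
        + (∑ c, |q x|⁻¹ * M.g x a c * pd b (fun y => k y c) x) = 0 :=
  ckv_killing_for_rescaled_metric_general M k hk_smooth kd hkd hCKV q hq
end
end

section
/- Let V be a vector space with nondegenerate symmetric form g, I ∈ V, and R an algebraic curvature tensor with R_{ABCD} = R̊_{ABCD} + (g∧P)_{ABCD} its trace decomposition (R̊ trace-free, P symmetric with trace J). If I^A R_{ABCD} = 0, then I^B P_{BD} = -(J/n) I_D, where n + 2 = dim V. -/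
noncomputable section
open scoped BigOperators

/-- Rank-4 covariant tensors on `ℝ^N`. -/
abbrev T4 (N : ℕ) := Fin N → Fin N → Fin N → Fin N → ℝ

/-- Algebraic curvature tensors (Riemann symmetries). -/
def IsCurv {N : ℕ} (X : T4 N) : Prop :=
  (∀ A B C D, X A B C D = -X B A C D) ∧ (∀ A B C D, X A B C D = -X A B D C) ∧
    (∀ A B C D, X A B C D = X C D A B) ∧
    (∀ A B C D, X A B C D + X B C A D + X C A B D = 0)

/-- The product `(Q∧P)_{ABCD} = Q_{AC}P_{BD} - Q_{BC}P_{AD} + Q_{BD}P_{AC} - Q_{AD}P_{BC}`. -/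
def wedge4 {N : ℕ} (Q P : Fin N → Fin N → ℝ) : T4 N := fun A B C D =>
  Q A C * P B D - Q B C * P A D + Q B D * P A C - Q A D * P B C

/-- Ricci-type contraction `R_{ABC}{}^B` (trace over the 2nd and 4th slots). -/
def ricciT {N : ℕ} (gi : Fin N → Fin N → ℝ) (R : T4 N) : Fin N → Fin N → ℝ :=
  fun A C => ∑ b, ∑ d, gi b d * R A b C d

/-- The tensor `P_{AC} = (1/n)(R_{ABC}{}^B - J g_{AC})`, `J = R_{AB}{}^{AB}/(2(n+1))`,
where the ambient dimension is `N = n+2`. -/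
def schoutenT {N : ℕ} (n : ℕ) (g gi : Fin N → Fin N → ℝ) (R : T4 N) :
    Fin N → Fin N → ℝ := fun A C =>
  (1 / (n : ℝ)) * (ricciT gi R A C
    - ((1 / (2 * ((n : ℝ) + 1))) * ∑ a, ∑ c, gi a c * ricciT gi R a c) * g A C)

/-- The totally trace-free (Weyl) part `R̊ = R - g∧P` of an algebraic curvature
tensor. -/
def tfT {N : ℕ} (n : ℕ) (g gi : Fin N → Fin N → ℝ) (R : T4 N) : T4 N :=
  fun A B C D => R A B C D - wedge4 g (schoutenT n g gi R) A B C D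

/-- if an algebraic curvature tensor `R = R̊ + g∧P` (with `R̊`
trace-free, `P` symmetric with trace `J`) satisfies `I^A R_{ABCD} = 0`, then
`I^B P_{BD} = -(J/n) I_D`. -/
theorem schouten_contraction {n : ℕ} (hn : 1 ≤ n)
    (g gi : Fin (n + 2) → Fin (n + 2) → ℝ)
    (hgsymm : ∀ a b, g a b = g b a)
    (hginv : ∀ a b, (∑ c, gi a c * g c b) = if a = b then (1 : ℝ) else 0)
    (I : Fin (n + 2) → ℝ)
    (R R0 : T4 (n + 2)) (P : Fin (n + 2) → Fin (n + 2) → ℝ)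
    (hcurv : IsCurv R)
    (hPsymm : ∀ a b, P a b = P b a)
    (hR0tf : ∀ A C, ricciT gi R0 A C = 0)
    (hdecomp : ∀ A B C D, R A B C D = R0 A B C D + wedge4 g P A B C D)
    (J : ℝ) (hJ : J = ∑ a, ∑ b, gi a b * P a b)
    (hI : ∀ B C D, (∑ A, I A * R A B C D) = 0) :
    ∀ D, (∑ B, I B * P B D) = -(J / (n : ℝ)) * ∑ b, g D b * I b := by

  -- `g * gi = 1` as well (inverse on the other side)
  have hginv' : ∀ a b, (∑ c, g a c * gi c b) = if a = b then (1 : ℝ) else 0 := by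
    have h1 : (Matrix.of gi) * (Matrix.of g) = 1 := by
      ext a b
      simpa [Matrix.mul_apply, Matrix.one_apply] using hginv a b
    have h2 : (Matrix.of g) * (Matrix.of gi) = 1 := mul_eq_one_comm.mp h1
    intro a b
    have := congrFun (congrFun h2 a) b
    simpa [Matrix.mul_apply, Matrix.one_apply] using this
  -- Ricci of R
  have hric : ∀ A C, ricciT gi R A C = J * g A C + (n : ℝ) * P A C := by
    intro A C
    have hexp : ricciT gi R A C
        = (∑ b, ∑ d, gi b d * (g A C * P b d))
          - (∑ b, ∑ d, gi b d * (g b C * P A d))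
          + (∑ b, ∑ d, gi b d * (g b d * P A C))
          - (∑ b, ∑ d, gi b d * (g A d * P b C)) := by
      have h0 := hR0tf A C
      unfold ricciT at h0 ⊢
      simp only [hdecomp, wedge4, mul_add, mul_sub, Finset.sum_add_distrib,
        Finset.sum_sub_distrib] at *
      linarith
    have hS1 : (∑ b, ∑ d, gi b d * (g A C * P b d)) = J * g A C := by
      rw [hJ, Finset.sum_mul]
      refine Finset.sum_congr rfl fun b _ => ?_
      rw [Finset.sum_mul]
      exact Finset.sum_congr rfl fun d _ => by ring
    have hS2 : (∑ b, ∑ d, gi b d * (g b C * P A d)) = P A C := by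
      rw [Finset.sum_comm]
      have : ∀ d, (∑ b, gi b d * (g b C * P A d))
          = (∑ b, g C b * gi b d) * P A d := by
        intro d
        rw [Finset.sum_mul]
        refine Finset.sum_congr rfl fun b _ => ?_
        rw [hgsymm C b]; ring
      simp only [this, hginv']
      simp
    have hS4 : (∑ b, ∑ d, gi b d * (g A d * P b C)) = P A C := by
      have : ∀ b, (∑ d, gi b d * (g A d * P b C))
          = (∑ d, gi b d * g d A) * P b C := by
        intro b
        rw [Finset.sum_mul]
        refine Finset.sum_congr rfl fun d _ => ?_
        rw [hgsymm A d]; ring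
      simp only [this, hginv]
      simp
    have hS3 : (∑ b, ∑ d, gi b d * (g b d * P A C)) = ((n : ℝ) + 2) * P A C := by
      have : ∀ b, (∑ d, gi b d * (g b d * P A C))
          = (∑ d, gi b d * g d b) * P A C := by
        intro b
        rw [Finset.sum_mul]
        refine Finset.sum_congr rfl fun d _ => ?_
        rw [hgsymm b d]; ring
      simp only [this, hginv]
      simp [Finset.sum_mul]
    rw [hexp, hS1, hS2, hS3, hS4]; ring
  intro D
  -- contract the hypothesis `I^A R_{ABCD} = 0`
  have key : (∑ A, I A * ricciT gi R A D) = 0 := by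
    have h0 : (∑ b, ∑ d, gi b d * (∑ A, I A * R A b D d)) = 0 := by
      simp [hI]
    calc (∑ A, I A * ricciT gi R A D)
        = ∑ A, ∑ b, ∑ d, gi b d * (I A * R A b D d) := by
          refine Finset.sum_congr rfl fun A _ => ?_
          unfold ricciT
          rw [Finset.mul_sum]
          refine Finset.sum_congr rfl fun b _ => ?_
          rw [Finset.mul_sum]
          exact Finset.sum_congr rfl fun d _ => by ring
      _ = ∑ b, ∑ A, ∑ d, gi b d * (I A * R A b D d) := Finset.sum_comm
      _ = ∑ b, ∑ d, ∑ A, gi b d * (I A * R A b D d) := by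
          exact Finset.sum_congr rfl fun b _ => Finset.sum_comm
      _ = ∑ b, ∑ d, gi b d * (∑ A, I A * R A b D d) := by
          refine Finset.sum_congr rfl fun b _ => Finset.sum_congr rfl fun d _ => ?_
          rw [Finset.mul_sum]
      _ = 0 := h0
  have key2 : J * (∑ A, I A * g A D) + (n : ℝ) * (∑ A, I A * P A D) = 0 := by
    have : (∑ A, I A * ricciT gi R A D)
        = J * (∑ A, I A * g A D) + (n : ℝ) * (∑ A, I A * P A D) := by
      simp only [hric, Finset.mul_sum, mul_add, Finset.sum_add_distrib]
      congr 1
      · exact Finset.sum_congr rfl fun A _ => by ring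
      · exact Finset.sum_congr rfl fun A _ => by ring
    rw [← this, key]
  have hg : (∑ b, g D b * I b) = ∑ A, I A * g A D := by
    refine Finset.sum_congr rfl fun b _ => ?_
    rw [hgsymm D b]; ring
  have hn0 : (n : ℝ) ≠ 0 := by positivity
  rw [hg]
  field_simp
  linarith [key2]
end
end
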